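/- arXiv:2304.12953 — 5 statements merged into one kernel-verified Lean document; each statement's English description precedes it below -/
import Mathlib

section
/- Let $\{r_n\} \subset (0,1)$ be a sequence decreasing monotonically to zero such that $r_n/r_{n+1} - 1 = o(r_n)$. Then for every $p \ge 1$, $\lim_{T\to\infty} \frac{\sum_{n=1}^{T} r_n^p \prod_{s=n+1}^{T}(1-r_s)}{r_T^{p-1}} = 1$. -/
/-!
Write `S T` for the sum and `f T = S T / r T ^ (p-1)`. Since
`S (T+1) = (1 - r (T+1)) S T + r (T+1) ^ p`, the ratio obeys
`f (T+1) = (1 - r (T+1)) x_T ^ (p-1) f T + r (T+1)` with `x_T = r T / r (T+1) ≥ 1`.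
The hypothesis gives `x_T ^ (p-1) - 1 = O(x_T - 1) = o(r (T+1))`, hence
`|f (T+1) - 1| ≤ (1 - r (T+1) / 2) |f T - 1| + o(r (T+1))`.
Such a perturbed contraction tends to zero as soon as `∑ r = ∞`, and this divergence also follows
from the hypothesis: `1 / r` grows at most linearly, so `r` dominates a multiple of the harmonic series.
-/

open Filter Asymptotics Topology Finset

theorem tendsto_zero_of_le_one_sub_mul {g c : ℕ → ℝ} (hg : ∀ n, 0 ≤ g n)
    (hc : ∀ n, 0 ≤ c n) (hdiv : ¬ Summable c)
    (hstep : ∀ᶠ n in atTop, g (n + 1) ≤ (1 - c n) * g n) :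
    Tendsto g atTop (𝓝 0) := by
  obtain ⟨N, hN⟩ := eventually_atTop.mp hstep
  have hbound : ∀ k, g (k + N) ≤ g N * Real.exp (-∑ i ∈ range k, c (i + N)) := by
    intro k
    induction k with
    | zero => simp
    | succ k ih =>
      calc g (k + 1 + N) = g (k + N + 1) := by rw [Nat.add_right_comm]
        _ ≤ (1 - c (k + N)) * g (k + N) := hN _ (Nat.le_add_left N k)
        _ ≤ Real.exp (-c (k + N)) * (g N * Real.exp (-∑ i ∈ range k, c (i + N))) :=
          mul_le_mul (Real.one_sub_le_exp_neg _) ih (hg _) (Real.exp_pos _).le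
        _ = g N * Real.exp (-∑ i ∈ range (k + 1), c (i + N)) := by
          rw [sum_range_succ, neg_add, Real.exp_add]; ring
  have hsum : Tendsto (fun k => ∑ i ∈ range k, c (i + N)) atTop atTop :=
    (not_summable_iff_tendsto_nat_atTop_of_nonneg fun i => hc _).mp
      (mt (summable_nat_add_iff N).mp hdiv)
  have hdecay : Tendsto (fun k => g N * Real.exp (-∑ i ∈ range k, c (i + N))) atTop (𝓝 0) := by
    simpa using (Real.tendsto_exp_neg_atTop_nhds_zero.comp hsum).const_mul (g N)
  exact (tendsto_add_atTop_iff_nat N).mp (squeeze_zero (fun k => hg _) hbound hdecay)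

theorem tendsto_zero_of_le_one_sub_mul_add {u c b : ℕ → ℝ} (hu : ∀ n, 0 ≤ u n)
    (hc0 : ∀ n, 0 ≤ c n) (hc1 : ∀ n, c n ≤ 1) (hdiv : ¬ Summable c) (hb : b =o[atTop] c)
    (hstep : ∀ᶠ n in atTop, u (n + 1) ≤ (1 - c n) * u n + b n) :
    Tendsto u atTop (𝓝 0) := by
  refine tendsto_order.2 ⟨fun a ha => .of_forall fun n => ha.trans_le (hu n), fun a ha => ?_⟩
  -- Above the level `a / 2` the excess contracts: the error `b n ≤ (a / 2) c n` is absorbed.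
  set ε := a / 2 with hε_def
  have hε : 0 < ε := half_pos ha
  have hexcess : Tendsto (fun n => max (u n - ε) 0) atTop (𝓝 0) := by
    refine tendsto_zero_of_le_one_sub_mul (fun n => le_max_right _ _) hc0 hdiv ?_
    filter_upwards [hstep, hb.bound hε] with n hn hbn
    rw [Real.norm_eq_abs, Real.norm_eq_abs, abs_of_nonneg (hc0 n)] at hbn
    have hfac : 0 ≤ 1 - c n := sub_nonneg.mpr (hc1 n)
    refine max_le ?_ (mul_nonneg hfac (le_max_right _ _))
    calc u (n + 1) - ε ≤ (1 - c n) * (u n - ε) := by nlinarith [le_abs_self (b n)]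
      _ ≤ (1 - c n) * max (u n - ε) 0 := mul_le_mul_of_nonneg_left (le_max_left _ _) hfac
  filter_upwards [hexcess.eventually (gt_mem_nhds hε)] with n hn
  linarith [le_max_left (u n - ε) 0, hε_def]

theorem not_summable_of_inv_succ_le_inv_add {r : ℕ → ℝ} (hpos : ∀ n, 0 < r n) (C : ℝ)
    (h : ∀ᶠ n in atTop, (r (n + 1))⁻¹ ≤ (r n)⁻¹ + C) : ¬ Summable r := by
  obtain ⟨N, hN⟩ := eventually_atTop.mp h
  have hgrowth : ∀ k : ℕ, (r (k + N))⁻¹ ≤ (r N)⁻¹ + C * k := by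
    intro k
    induction k with
    | zero => simp
    | succ k ih =>
      have := hN (k + N) (Nat.le_add_left N k)
      rw [Nat.add_right_comm]; push_cast; linarith
  set K := (r N)⁻¹ + |C|
  have hK : 0 < K := add_pos_of_pos_of_nonneg (inv_pos.mpr (hpos N)) (abs_nonneg C)
  have hharm : ∀ k : ℕ, (k : ℝ)⁻¹ ≤ K * r (k + N) := by
    intro k
    rcases Nat.eq_zero_or_pos k with rfl | hk
    · simpa using (mul_pos hK (hpos N)).le
    have hk1 : (1 : ℝ) ≤ k := Nat.one_le_cast.mpr hk
    have hrk := hpos (k + N)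
    rw [inv_le_iff_one_le_mul₀ (by positivity)]
    have : (r (k + N))⁻¹ ≤ K * k := by
      nlinarith [hgrowth k, le_abs_self C, inv_pos.mpr (hpos N)]
    rw [inv_le_iff_one_le_mul₀ hrk] at this
    linarith
  intro hsum
  exact Real.not_summable_natCast_inv <| Summable.of_nonneg_of_le (fun k => by positivity) hharm
    (((summable_nat_add_iff N).mpr hsum).mul_left K)

theorem not_summable_of_div_succ_sub_one_isBigO {r : ℕ → ℝ} (hpos : ∀ n, 0 < r n)
    (hrel : (fun n => r n / r (n + 1) - 1) =O[atTop] r) : ¬ Summable r := by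
  obtain ⟨C, hC⟩ := hrel.bound
  refine not_summable_of_inv_succ_le_inv_add hpos C ?_
  filter_upwards [hC] with n hn
  rw [Real.norm_eq_abs, Real.norm_eq_abs, abs_of_pos (hpos n)] at hn
  have hr := hpos n
  calc (r (n + 1))⁻¹ = (r n / r (n + 1)) / r n := by field_simp
    _ ≤ (1 + C * r n) / r n := by gcongr; linarith [le_abs_self (r n / r (n + 1) - 1)]
    _ = (r n)⁻¹ + C := by field_simp

theorem sum_Icc_mul_prod_Icc_succ {R : Type*} [CommSemiring R] (a w : ℕ → R) (T : ℕ) :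
    ∑ n ∈ Icc 1 (T + 1), a n * ∏ s ∈ Icc (n + 1) (T + 1), w s
      = w (T + 1) * ∑ n ∈ Icc 1 T, a n * ∏ s ∈ Icc (n + 1) T, w s + a (T + 1) := by
  rw [sum_Icc_succ_top (Nat.le_add_left 1 T), Icc_eq_empty_of_lt (Nat.lt_succ_self _), prod_empty,
    mul_one, mul_sum]
  congr 1
  refine sum_congr rfl fun n hn => ?_
  rw [prod_Icc_succ_top (by simp at hn; omega)]
  ring

theorem isBigO_rpow_sub_one {α : Type*} {l : Filter α} {x : α → ℝ} (hx : Tendsto x l (𝓝 1))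
    (a : ℝ) : (fun i => x i ^ a - 1) =O[l] (fun i => x i - 1) := by
  have h := (Real.hasDerivAt_rpow_const (x := 1) (p := a) (.inl one_ne_zero)).isBigO_sub
  rw [Real.one_rpow] at h
  exact h.comp_tendsto hx

theorem rpow_div_succ_sub_one_isLittleO {r : ℕ → ℝ} (hpos : ∀ n, 0 < r n)
    (hbdd : r =O[atTop] (fun _ => (1 : ℝ)))
    (hrel : (fun n => r n / r (n + 1) - 1) =o[atTop] r) (a : ℝ) :
    (fun n => (r n / r (n + 1)) ^ a - 1) =o[atTop] (fun n => r (n + 1)) := by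
  have hratio : Tendsto (fun n => r n / r (n + 1)) atTop (𝓝 1) :=
    tendsto_sub_nhds_zero_iff.mp ((isLittleO_one_iff ℝ).mp (hrel.trans_isBigO hbdd))
  have hshift : r =O[atTop] fun n => r (n + 1) := by
    refine ((hratio.isBigO_one ℝ).mul (isBigO_refl (fun n => r (n + 1)) atTop)).congr
      (fun n => div_mul_cancel₀ _ (hpos (n + 1)).ne') (fun n => one_mul _)
  exact (isBigO_rpow_sub_one hratio a).trans_isLittleO (hrel.trans_isBigO hshift)

noncomputable def normalizedSum (r : ℕ → ℝ) (p : ℝ) (T : ℕ) : ℝ :=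
  (∑ n ∈ Icc 1 T, (r n) ^ p * ∏ s ∈ Icc (n + 1) T, (1 - r s)) / (r T) ^ (p - 1)

theorem normalizedSum_succ {r : ℕ → ℝ} (p : ℝ) {T : ℕ} (hT : 0 < r T) (hT1 : 0 < r (T + 1)) :
    normalizedSum r p (T + 1)
      = (1 - r (T + 1)) * (r T / r (T + 1)) ^ (p - 1) * normalizedSum r p T + r (T + 1) := by
  have hpow : r (T + 1) ^ p / r (T + 1) ^ (p - 1) = r (T + 1) := by
    rw [← Real.rpow_sub hT1, sub_sub_cancel, Real.rpow_one]
  have hT' : 0 < r T ^ (p - 1) := Real.rpow_pos_of_pos hT _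
  rw [normalizedSum, normalizedSum, sum_Icc_mul_prod_Icc_succ, add_div, hpow,
    Real.div_rpow hT.le hT1.le]
  field_simp

theorem abs_mul_add_sub_one_le {q y s c : ℝ} (hq0 : 0 ≤ q) (hq : q ≤ 1 - c) :
    |q * y + s - 1| ≤ (1 - c) * |y - 1| + |q + s - 1| :=
  calc |q * y + s - 1| = |q * (y - 1) + (q + s - 1)| := by ring_nf
    _ ≤ q * |y - 1| + |q + s - 1| := by
      simpa only [abs_mul, abs_of_nonneg hq0] using abs_add_le (q * (y - 1)) (q + s - 1)
    _ ≤ (1 - c) * |y - 1| + |q + s - 1| := by gcongr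

theorem abs_normalizedSum_succ_sub_one_le {r : ℕ → ℝ} {p : ℝ} (hp : 1 ≤ p) {n : ℕ}
    (hn : 0 < r n) (hn1 : 0 < r (n + 1)) (hlt1 : r (n + 1) < 1) (hmono : r (n + 1) ≤ r n)
    (hdefect : (1 - r (n + 1)) * ((r n / r (n + 1)) ^ (p - 1) - 1) ≤ 2⁻¹ * r (n + 1)) :
    |normalizedSum r p (n + 1) - 1| ≤ (1 - 2⁻¹ * r (n + 1)) * |normalizedSum r p n - 1|
      + |(1 - r (n + 1)) * ((r n / r (n + 1)) ^ (p - 1) - 1)| := by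
  have hX : 1 ≤ (r n / r (n + 1)) ^ (p - 1) :=
    Real.one_le_rpow ((one_le_div hn1).mpr hmono) (by linarith)
  rw [normalizedSum_succ p hn hn1, show (1 - r (n + 1)) * ((r n / r (n + 1)) ^ (p - 1) - 1)
    = (1 - r (n + 1)) * (r n / r (n + 1)) ^ (p - 1) + r (n + 1) - 1 by ring]
  exact abs_mul_add_sub_one_le (by nlinarith) (by linarith)

theorem stmt0_general (r : ℕ → ℝ)
    (hpos : ∀ n, 0 < r n) (hlt1 : ∀ n, r n < 1)
    (hmono : ∀ n, r (n + 1) ≤ r n)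
    (hrel : (fun n => r n / r (n + 1) - 1) =o[atTop] r)
    (p : ℝ) (hp : 1 ≤ p) :
    Tendsto
      (fun T => (∑ n ∈ Finset.Icc 1 T,
          (r n) ^ p * ∏ s ∈ Finset.Icc (n + 1) T, (1 - r s)) / (r T) ^ (p - 1))
      atTop (nhds 1) := by
  have hbounded : ∀ n, |r n| ≤ 1 := fun n => by rw [abs_of_pos (hpos n)]; exact (hlt1 n).le
  have hdefect : (fun n => (1 - r (n + 1)) * ((r n / r (n + 1)) ^ (p - 1) - 1))
      =o[atTop] fun n => r (n + 1) := by
    have hfactor : (fun n => 1 - r (n + 1)) =O[atTop] fun _ => (1 : ℝ) :=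
      .of_bound 1 <| .of_forall fun n => by
        simpa [abs_of_pos (sub_pos.mpr (hlt1 (n + 1)))] using (hpos (n + 1)).le
    simpa using hfactor.mul_isLittleO <| rpow_div_succ_sub_one_isLittleO hpos
      (.of_bound 1 <| .of_forall fun n => by simpa using hbounded n) hrel (p - 1)
  have hdiv : ¬ Summable fun n => 2⁻¹ * r (n + 1) := by
    rw [summable_mul_left_iff (by norm_num), summable_nat_add_iff 1]
    exact not_summable_of_div_succ_sub_one_isBigO hpos hrel.isBigO
  have hstep : ∀ᶠ n in atTop, |normalizedSum r p (n + 1) - 1|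
      ≤ (1 - 2⁻¹ * r (n + 1)) * |normalizedSum r p n - 1|
        + |(1 - r (n + 1)) * ((r n / r (n + 1)) ^ (p - 1) - 1)| := by
    filter_upwards [hdefect.bound (inv_pos.mpr two_pos)] with n hn
    rw [Real.norm_eq_abs, Real.norm_eq_abs, abs_of_pos (hpos (n + 1))] at hn
    exact abs_normalizedSum_succ_sub_one_le hp (hpos n) (hpos (n + 1)) (hlt1 (n + 1)) (hmono n)
      ((le_abs_self _).trans hn)
  show Tendsto (normalizedSum r p) atTop (𝓝 1)
  rw [tendsto_iff_norm_sub_tendsto_zero]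
  simp only [Real.norm_eq_abs]
  exact tendsto_zero_of_le_one_sub_mul_add (fun _ => abs_nonneg _)
    (fun n => by linarith [hpos (n + 1)]) (fun n => by linarith [hlt1 (n + 1), hpos (n + 1)])
    hdiv (isLittleO_abs_left.mpr (hdefect.const_mul_right' (by norm_num))) hstep

/-- Lemma 1 of the paper: if `r n ∈ (0,1)` decreases monotonically to zero and
`r n / r (n+1) - 1 = o(r n)`, then for every `p ≥ 1`,
`(∑_{n=1}^{T} r_n^p ∏_{s=n+1}^{T} (1 - r_s)) / r_T^{p-1} → 1` as `T → ∞`. -/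
theorem stmt0 (r : ℕ → ℝ)
    (hpos : ∀ n, 0 < r n) (hlt1 : ∀ n, r n < 1)
    (hmono : ∀ n, r (n + 1) ≤ r n)
    (hlim : Tendsto r atTop (nhds 0))
    (hrel : (fun n => r n / r (n + 1) - 1) =o[atTop] r)
    (p : ℝ) (hp : 1 ≤ p) :
    Tendsto
      (fun T => (∑ n ∈ Finset.Icc 1 T,
          (r n) ^ p * ∏ s ∈ Finset.Icc (n + 1) T, (1 - r s)) / (r T) ^ (p - 1))
      atTop (nhds 1) :=
  stmt0_general r hpos hlt1 hmono hrel p hp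
end

section
/- Let $\{r_n\} \subset (0,1)$ be a sequence decreasing monotonically to zero, and let $a > 0$ satisfy $r_n/r_{n+1} - 1 = a r_n + o(r_n)$. If $p \ge 1$ and $1/a > p - 1$, then $\lim_{T\to\infty} \frac{\sum_{n=1}^{T} r_n^p \prod_{s=n+1}^{T}(1-r_s)}{r_T^{p-1}} = \frac{1}{1 - a(p-1)}$. -/
open Filter Asymptotics Topology Finset

/-!
Write `x_T` for the normalised sum. The sums satisfy `S_{T+1} = (1 - r_{T+1}) S_T + r_{T+1}^p`, so
`x_{T+1} = (1 - α_T) x_T + r_{T+1}` with `α_T = 1 - (1 - r_{T+1}) (r_T / r_{T+1})^{p-1}`.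
Differentiating `y ↦ y^{p-1}` at `y = 1` gives `α_T / r_T → 1 - a(p-1) > 0`, and since
`1/r_{T+1} - 1/r_T → a`, `r_T` is at least of order `1/T`, so `∑ α_T = ∞`.
Finally, if `x_{n+1} = (1 - α_n) x_n + d_n` with `α_n ∈ (0, 1]`, `∑ α_n = ∞` and `d_n / α_n → L`,
then `|x_n - L| - ε` eventually contracts by the factor `1 - α_n` at each step, and
`∏ (1 - α_i) ≤ exp (-∑ α_i) → 0`, so `x_n → L`.
-/

theorem sum_Icc_mul_prod_Icc_succ_top {R : Type*} [CommSemiring R] (b c : ℕ → R) (T : ℕ) :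
    ∑ n ∈ Icc 1 (T + 1), b n * ∏ s ∈ Icc (n + 1) (T + 1), c s
      = c (T + 1) * ∑ n ∈ Icc 1 T, b n * ∏ s ∈ Icc (n + 1) T, c s + b (T + 1) := by
  rw [sum_Icc_succ_top (by omega), Icc_eq_empty_of_lt (Nat.lt_succ_self _), prod_empty, mul_one,
    mul_sum]
  congr 1
  refine sum_congr rfl fun n hn => ?_
  rw [prod_Icc_succ_top (by grind)]
  ring

theorem one_sub_mul_add_rpow_div_rpow {y z : ℝ} (hy : 0 < y) (hz : 0 < z) (F p : ℝ) :
    ((1 - z) * F + z ^ p) / z ^ (p - 1) = (1 - z) * (y / z) ^ (p - 1) * (F / y ^ (p - 1)) + z := by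
  have hzp : z ^ p / z ^ (p - 1) = z := by rw [← Real.rpow_sub hz, sub_sub_cancel, Real.rpow_one]
  rw [add_div, hzp, Real.div_rpow hy.le hz.le]
  field_simp

theorem HasDerivAt.tendsto_sub_div {𝕜 ι : Type*} [NontriviallyNormedField 𝕜] {f : 𝕜 → 𝕜}
    {f' y₀ c : 𝕜} (hf : HasDerivAt f f' y₀) {l : Filter ι} {y r : ι → 𝕜}
    (hr : ∀ᶠ i in l, r i ≠ 0) (hy : Tendsto y l (𝓝 y₀))
    (hyr : Tendsto (fun i => (y i - y₀) / r i) l (𝓝 c)) :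
    Tendsto (fun i => (f (y i) - f y₀) / r i) l (𝓝 (c * f')) := by
  have hO : (fun i => y i - y₀) =O[l] r :=
    isBigO_of_div_tendsto_nhds (hr.mono fun i hi h => absurd h hi) c hyr
  have ho := ((hf.isLittleO.comp_tendsto hy).trans_isBigO hO).tendsto_div_nhds_zero
  refine (zero_add (c * f') ▸ ho.add (hyr.mul_const f')).congr fun i => ?_
  simp only [Function.comp_apply, smul_eq_mul]
  ring

theorem tendsto_prod_Ico_one_sub_of_not_summable {α : ℕ → ℝ} {N : ℕ}
    (h0 : ∀ n ≥ N, 0 ≤ α n) (h1 : ∀ n ≥ N, α n ≤ 1) (hα : ¬ Summable α) :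
    Tendsto (fun n => ∏ i ∈ Ico N n, (1 - α i)) atTop (𝓝 0) := by
  have hsum : Tendsto (fun n => ∑ i ∈ Ico N n, α i) atTop atTop := by
    have hshift : ¬ Summable fun k => α (N + k) := by
      simpa only [add_comm N] using (summable_nat_add_iff N).not.2 hα
    have h := (not_summable_iff_tendsto_nat_atTop_of_nonneg fun k => h0 (N + k) (by omega)).1 hshift
    exact (h.comp (tendsto_sub_atTop_nat N)).congr fun n => (sum_Ico_eq_sum_range _ _ _).symm
  refine squeeze_zero (fun n => prod_nonneg fun i hi => sub_nonneg.2 (h1 i (mem_Ico.1 hi).1))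
    (fun n => ?_) (Real.tendsto_exp_atBot.comp (tendsto_neg_atTop_atBot.comp hsum))
  rw [Function.comp_apply, Function.comp_apply, ← sum_neg_distrib, Real.exp_sum]
  refine prod_le_prod (fun i hi => sub_nonneg.2 (h1 i (mem_Ico.1 hi).1)) fun i _ => ?_
  linarith [Real.add_one_le_exp (-α i)]

theorem le_mul_prod_Ico_of_le_one_sub_mul {w α : ℕ → ℝ} {N : ℕ} (hα : ∀ n ≥ N, α n ≤ 1)
    (hw : ∀ n ≥ N, w (n + 1) ≤ (1 - α n) * w n) :
    ∀ n ≥ N, w n ≤ w N * ∏ i ∈ Ico N n, (1 - α i) := by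
  intro n hn
  induction n, hn using Nat.le_induction with
  | base => simp
  | succ n hn ih =>
    calc w (n + 1) ≤ (1 - α n) * w n := hw n hn
      _ ≤ (1 - α n) * (w N * ∏ i ∈ Ico N n, (1 - α i)) :=
        mul_le_mul_of_nonneg_left ih (sub_nonneg.2 (hα n hn))
      _ = _ := by rw [prod_Ico_succ_top hn]; ring

theorem tendsto_of_eq_one_sub_mul_add {x α d : ℕ → ℝ} {L : ℝ}
    (hx : ∀ n, x (n + 1) = (1 - α n) * x n + d n) (hα : ∀ᶠ n in atTop, 0 < α n ∧ α n ≤ 1)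
    (hd : Tendsto (fun n => d n / α n) atTop (𝓝 L)) (hsum : ¬ Summable α) :
    Tendsto x atTop (𝓝 L) := by
  refine Metric.tendsto_nhds.2 fun ε hε => ?_
  obtain ⟨N, hN⟩ := eventually_atTop.1 (hα.and (Metric.tendsto_nhds.1 hd (ε / 2) (half_pos hε)))
  have hstep : ∀ n ≥ N, |x (n + 1) - L| - ε / 2 ≤ (1 - α n) * (|x n - L| - ε / 2) := by
    intro n hn
    obtain ⟨⟨hα0, hα1⟩, hdn⟩ := hN n hn
    have hsplit : x (n + 1) - L = (1 - α n) * (x n - L) + α n * (d n / α n - L) := by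
      rw [hx, mul_sub (α n), mul_div_cancel₀ _ hα0.ne']; ring
    have := abs_add_le ((1 - α n) * (x n - L)) (α n * (d n / α n - L))
    rw [← hsplit, abs_mul, abs_mul, abs_of_nonneg (sub_nonneg.2 hα1), abs_of_pos hα0] at this
    nlinarith [Real.dist_eq (d n / α n) L]
  have hsmall : ∀ᶠ n in atTop, (|x N - L| - ε / 2) * ∏ i ∈ Ico N n, (1 - α i) < ε / 2 := by
    have := (tendsto_prod_Ico_one_sub_of_not_summable (fun n hn => (hN n hn).1.1.le)
      (fun n hn => (hN n hn).1.2) hsum).const_mul (|x N - L| - ε / 2)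
    exact (mul_zero (|x N - L| - ε / 2) ▸ this).eventually (gt_mem_nhds (half_pos hε))
  filter_upwards [eventually_ge_atTop N, hsmall] with n hn hn'
  have := le_mul_prod_Ico_of_le_one_sub_mul (w := fun n => |x n - L| - ε / 2)
    (fun n hn => (hN n hn).1.2) hstep n hn
  rw [Real.dist_eq]
  linarith

theorem not_summable_of_inv_succ_sub_inv_le {r : ℕ → ℝ} (hpos : ∀ n, 0 < r n) {C : ℝ}
    (h : ∀ᶠ n in atTop, (r (n + 1))⁻¹ - (r n)⁻¹ ≤ C) : ¬ Summable r := by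
  obtain ⟨N, hN⟩ := eventually_atTop.1 h
  have hgrowth : ∀ n ≥ N, (r n)⁻¹ ≤ (r N)⁻¹ + C * (n - N) := by
    intro n hn
    induction n, hn using Nat.le_induction with
    | base => simp
    | succ n hn ih => push_cast; linarith [hN n hn]
  have hO : (fun n : ℕ => (n : ℝ)⁻¹) =O[atTop] r := by
    refine IsBigO.of_bound ((r N)⁻¹ + |C|) ?_
    filter_upwards [eventually_ge_atTop N, eventually_gt_atTop 0] with n hNn hn
    have hn1 : (1 : ℝ) ≤ n := by exact_mod_cast hn
    have hN0 : (0 : ℝ) ≤ N := N.cast_nonneg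
    have hrN := inv_pos.2 (hpos N)
    have hinv : (r n)⁻¹ ≤ ((r N)⁻¹ + |C|) * n := by
      nlinarith [hgrowth n hNn, le_abs_self C, abs_nonneg C, (Nat.cast_le (α := ℝ)).2 hNn]
    rw [Real.norm_of_nonneg (by positivity), Real.norm_of_nonneg (hpos n).le,
      inv_le_iff_one_le_mul₀ (by positivity)]
    nlinarith [mul_inv_cancel₀ (hpos n).ne', hpos n]
  exact fun hr => Real.not_summable_natCast_inv (summable_of_isBigO_nat hr hO)

section

variable {r : ℕ → ℝ} {a : ℝ}

theorem tendsto_inv_succ_sub_inv_of_isLittleO (hpos : ∀ n, 0 < r n)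
    (hrel : (fun n => r n / r (n + 1) - 1 - a * r n) =o[atTop] r) :
    Tendsto (fun n => (r (n + 1))⁻¹ - (r n)⁻¹) atTop (𝓝 a) := by
  refine (zero_add a ▸ hrel.tendsto_div_nhds_zero.add_const a).congr fun n => ?_
  field_simp [(hpos n).ne', (hpos (n + 1)).ne']
  ring

theorem tendsto_div_succ_of_isLittleO (hpos : ∀ n, 0 < r n) (hlim : Tendsto r atTop (𝓝 0))
    (hrel : (fun n => r n / r (n + 1) - 1 - a * r n) =o[atTop] r) :
    Tendsto (fun n => r n / r (n + 1)) atTop (𝓝 1) := by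
  have h := ((tendsto_inv_succ_sub_inv_of_isLittleO hpos hrel).mul hlim).const_add 1
  rw [mul_zero, add_zero] at h
  refine h.congr fun n => ?_
  field_simp [(hpos n).ne', (hpos (n + 1)).ne']
  ring

theorem tendsto_one_sub_mul_rpow_div_of_isLittleO (hpos : ∀ n, 0 < r n)
    (hlim : Tendsto r atTop (𝓝 0))
    (hrel : (fun n => r n / r (n + 1) - 1 - a * r n) =o[atTop] r) (p : ℝ) :
    Tendsto (fun n => (1 - (1 - r (n + 1)) * (r n / r (n + 1)) ^ (p - 1)) / r n) atTop
      (𝓝 (1 - a * (p - 1))) := by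
  have hρ := tendsto_div_succ_of_isLittleO hpos hlim hrel
  have hρr : Tendsto (fun n => (r n / r (n + 1) - 1) / r n) atTop (𝓝 a) := by
    refine (tendsto_inv_succ_sub_inv_of_isLittleO hpos hrel).congr fun n => ?_
    field_simp [(hpos n).ne', (hpos (n + 1)).ne']
  have hq := (Real.hasDerivAt_rpow_const (x := 1) (p := p - 1) (Or.inl one_ne_zero)).tendsto_sub_div
    (Eventually.of_forall fun n => (hpos n).ne') hρ hρr
  have hq1 := hρ.rpow_const (p := p - 1) (Or.inl one_ne_zero)
  have hlim' := hq.neg.add (hq1.mul (hρ.inv₀ one_ne_zero))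
  simp only [Real.one_rpow, mul_one, inv_one] at hlim'
  convert hlim' using 2 with n
  · field_simp [(hpos n).ne', (hpos (n + 1)).ne']
    ring
  · ring

end

theorem stmt1_general (r : ℕ → ℝ)
    (hpos : ∀ n, 0 < r n)
    (hlim : Tendsto r atTop (nhds 0))
    (a : ℝ) (ha : 0 < a)
    (hrel : (fun n => r n / r (n + 1) - 1 - a * r n) =o[atTop] r)
    (p : ℝ) (hpa : p - 1 < 1 / a) :
    Tendsto
      (fun T => (∑ n ∈ Finset.Icc 1 T,
          (r n) ^ p * ∏ s ∈ Finset.Icc (n + 1) T, (1 - r s)) / (r T) ^ (p - 1))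
      atTop (nhds (1 / (1 - a * (p - 1)))) := by
  have hκ : 0 < 1 - a * (p - 1) := sub_pos.2 ((lt_div_iff₀' ha).1 hpa)
  set α : ℕ → ℝ := fun n => 1 - (1 - r (n + 1)) * (r n / r (n + 1)) ^ (p - 1) with hα
  have hαr : Tendsto (fun n => α n / r n) atTop (𝓝 (1 - a * (p - 1))) :=
    tendsto_one_sub_mul_rpow_div_of_isLittleO hpos hlim hrel p
  have hα0 : Tendsto α atTop (𝓝 0) :=
    (mul_zero (1 - a * (p - 1)) ▸ hαr.mul hlim).congr fun n => div_mul_cancel₀ _ (hpos n).ne'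
  have hαpos : ∀ᶠ n in atTop, 0 < α n ∧ α n ≤ 1 := by
    filter_upwards [hαr.eventually (lt_mem_nhds hκ), hα0.eventually (gt_mem_nhds one_pos)]
      with n hn hn'
    exact ⟨(div_pos_iff_of_pos_right (hpos n)).1 hn, hn'.le⟩
  have hr : ¬ Summable r := not_summable_of_inv_succ_sub_inv_le hpos
    ((tendsto_inv_succ_sub_inv_of_isLittleO hpos hrel).eventually (ge_mem_nhds (lt_add_one a)))
  have hrα : r =O[atTop] α := isBigO_of_div_tendsto_nhds_of_ne_zero hαr hκ.ne'
  refine tendsto_of_eq_one_sub_mul_add (α := α) (d := fun T => r (T + 1)) (fun T => ?_) hαpos ?_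
    fun hs => hr (summable_of_isBigO_nat hs hrα)
  · rw [sum_Icc_mul_prod_Icc_succ_top,
      one_sub_mul_add_rpow_div_rpow (hpos T) (hpos (T + 1)), hα, sub_sub_cancel]
  · have hsucc : Tendsto (fun n => r (n + 1) / r n) atTop (𝓝 1) := by
      simpa only [inv_div, inv_one] using
        (tendsto_div_succ_of_isLittleO hpos hlim hrel).inv₀ one_ne_zero
    refine (hsucc.div hαr hκ.ne').congr fun n => ?_
    exact div_div_div_cancel_right₀ (hpos n).ne' _ _

/-- Lemma 2 of the paper: if `r n ∈ (0,1)` decreases monotonically to zero,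
`a > 0`, and `r n / r (n+1) - 1 = a r n + o(r n)`, then for `p ≥ 1` with
`1/a > p - 1`, `(∑_{n=1}^{T} r_n^p ∏_{s=n+1}^{T} (1 - r_s)) / r_T^{p-1} → 1/(1 - a(p-1))`. -/
theorem stmt1 (r : ℕ → ℝ)
    (hpos : ∀ n, 0 < r n) (hlt1 : ∀ n, r n < 1)
    (hmono : ∀ n, r (n + 1) ≤ r n)
    (hlim : Tendsto r atTop (nhds 0))
    (a : ℝ) (ha : 0 < a)
    (hrel : (fun n => r n / r (n + 1) - 1 - a * r n) =o[atTop] r)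
    (p : ℝ) (hp : 1 ≤ p) (hpa : p - 1 < 1 / a) :
    Tendsto
      (fun T => (∑ n ∈ Finset.Icc 1 T,
          (r n) ^ p * ∏ s ∈ Finset.Icc (n + 1) T, (1 - r s)) / (r T) ^ (p - 1))
      atTop (nhds (1 / (1 - a * (p - 1)))) :=
  stmt1_general r hpos hlim a ha hrel p hpa
end

section
/- Let $\{r_n\} \subset (0,1)$ decrease monotonically to zero with $r_n/r_{n+1} - 1 = o(r_n)$. Then $\lim_{n\to\infty} \frac{1}{n r_n} = 0$ and consequently $\lim_{n\to\infty} \frac{\sum_{s=1}^n 1/s}{\sum_{s=1}^n r_s} = 0$. -/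
open Filter Asymptotics

lemma icc_sum_eq_range (f : ℕ → ℝ) (n : ℕ) :
    ∑ s ∈ Finset.Icc 1 n, f s = ∑ i ∈ Finset.range n, f (i + 1) := by
  induction n with
  | zero => simp
  | succ n ih =>
    rw [Finset.sum_Icc_succ_top (by omega), Finset.sum_range_succ, ih]

/-- If `r n ∈ (0,1)` decreases monotonically to zero with
`r n / r (n+1) - 1 = o(r n)`, then `1/(n r n) → 0` and
`(∑_{s=1}^n 1/s) / (∑_{s=1}^n r s) → 0`. -/
theorem stmt4 (r : ℕ → ℝ)
    (hpos : ∀ n, 0 < r n) (hlt1 : ∀ n, r n < 1)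
    (hmono : ∀ n, r (n + 1) ≤ r n)
    (hlim : Tendsto r atTop (nhds 0))
    (hrel : (fun n => r n / r (n + 1) - 1) =o[atTop] r) :
    Tendsto (fun n : ℕ => 1 / ((n : ℝ) * r n)) atTop (nhds 0) ∧
    Tendsto (fun n : ℕ =>
        (∑ s ∈ Finset.Icc 1 n, (1 : ℝ) / (s : ℝ)) / (∑ s ∈ Finset.Icc 1 n, r s))
      atTop (nhds 0) := by
  have hr0 : ∀ n, r n ≠ 0 := fun n => (hpos n).ne'
  -- differences of 1/r tend to 0
  have hd : Tendsto (fun n => 1 / r (n + 1) - 1 / r n) atTop (nhds 0) := by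
    have h := (isLittleO_iff_tendsto (fun n h => absurd h (hr0 n))).mp hrel
    refine h.congr fun n => ?_
    show (r n / r (n + 1) - 1) / r n = 1 / r (n + 1) - 1 / r n
    field_simp [hr0 n, hr0 (n+1)]
  have hsum : (fun n => ∑ i ∈ Finset.range n, (1 / r (i + 1) - 1 / r i))
      =o[atTop] fun n => (n : ℝ) :=
    Asymptotics.isLittleO_sum_range_of_tendsto_zero hd
  have htel : ∀ n, ∑ i ∈ Finset.range n, (1 / r (i + 1) - 1 / r i)
      = 1 / r n - 1 / r 0 := fun n => Finset.sum_range_sub (fun i => 1 / r i) n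
  have h1 : Tendsto (fun n : ℕ => 1 / ((n : ℝ) * r n)) atTop (nhds 0) := by
    have ht1 : Tendsto (fun n : ℕ => (1 / r n - 1 / r 0) / (n : ℝ)) atTop (nhds 0) := by
      have := hsum.tendsto_div_nhds_zero
      refine this.congr fun n => ?_
      rw [htel n]
    have ht2 : Tendsto (fun n : ℕ => (1 / r 0) / (n : ℝ)) atTop (nhds 0) :=
      tendsto_const_div_atTop_nhds_zero_nat _
    have := ht1.add ht2
    rw [add_zero] at this
    refine this.congr fun n => ?_
    rw [div_div, mul_comm ((n:ℝ)) (r n)]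
    ring
  refine ⟨h1, ?_⟩
  -- n * r n → ∞
  have h2 : Tendsto (fun n : ℕ => (n : ℝ) * r n) atTop atTop := by
    have hpos' : ∀ᶠ n : ℕ in atTop, 1 / ((n : ℝ) * r n) ∈ Set.Ioi (0 : ℝ) := by
      filter_upwards [eventually_ge_atTop 1] with n hn
      have hn' : (0 : ℝ) < (n : ℝ) := by exact_mod_cast hn
      have : (0 : ℝ) < (n : ℝ) * r n := mul_pos hn' (hpos n)
      simpa using one_div_pos.mpr this
    have := (tendsto_nhdsWithin_of_tendsto_nhds_of_eventually_within _ h1 hpos').inv_tendsto_nhdsGT_zero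
    refine this.congr fun n => ?_
    simp
  -- eventually r (n+1) ≥ 1/(n+1)
  have h3 : ∀ᶠ n : ℕ in atTop, 1 / ((n : ℝ) + 1) ≤ r (n + 1) := by
    have h2' : Tendsto (fun n : ℕ => ((n + 1 : ℕ) : ℝ) * r (n + 1)) atTop atTop :=
      h2.comp (tendsto_add_atTop_nat 1)
    filter_upwards [h2'.eventually_ge_atTop 1] with n hn
    have hp : (0 : ℝ) < (n : ℝ) + 1 := by positivity
    rw [div_le_iff₀ hp]
    push_cast at hn
    linarith [mul_comm (r (n + 1)) ((n : ℝ) + 1)]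
  -- partial sums of r (·+1) tend to infinity
  obtain ⟨N, hN⟩ := eventually_atTop.mp h3
  have hgsum : Tendsto (fun n => ∑ i ∈ Finset.range n, r (i + 1)) atTop atTop := by
    have hH : Tendsto (fun n => (∑ i ∈ Finset.range n, 1 / ((i : ℝ) + 1))
        - ∑ i ∈ Finset.range N, 1 / ((i : ℝ) + 1)) atTop atTop := by
      exact tendsto_atTop_add_const_right _ _ Real.tendsto_sum_range_one_div_nat_succ_atTop
    apply tendsto_atTop_mono' atTop ?_ hH
    filter_upwards [eventually_ge_atTop N] with n hn
    have hsplit : ∀ (f : ℕ → ℝ), ∑ i ∈ Finset.range n, f i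
        = ∑ i ∈ Finset.range N, f i + ∑ i ∈ Finset.Ico N n, f i := fun f =>
      (Finset.sum_range_add_sum_Ico f hn).symm
    rw [hsplit (fun i => 1 / ((i : ℝ) + 1)), hsplit (fun i => r (i + 1))]
    have hA : ∑ i ∈ Finset.Ico N n, 1 / ((i : ℝ) + 1) ≤ ∑ i ∈ Finset.Ico N n, r (i + 1) := by
      apply Finset.sum_le_sum
      intro i hi
      exact hN i (Finset.mem_Ico.mp hi).1
    have hB : (0 : ℝ) ≤ ∑ i ∈ Finset.range N, r (i + 1) :=
      Finset.sum_nonneg fun i _ => (hpos _).le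
    linarith
  -- 1/(i+1) = o(r (i+1))
  have hfo : (fun i : ℕ => 1 / ((i : ℝ) + 1)) =o[atTop] fun i => r (i + 1) := by
    rw [isLittleO_iff_tendsto (fun n h => absurd h (hr0 _))]
    have := h1.comp (tendsto_add_atTop_nat 1)
    refine this.congr fun n => ?_
    simp only [Function.comp_apply]
    push_cast
    rw [div_div]
  have hbig := hfo.sum_range (fun i => (hpos _).le) hgsum
  have := hbig.tendsto_div_nhds_zero
  refine this.congr fun n => ?_
  rw [icc_sum_eq_range (fun s => (1 : ℝ) / (s : ℝ)) n, icc_sum_eq_range r n]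
  push_cast
  rfl
end

section
/- Fix positive integers $k$ and $d$ with $k + 1 < d$. Then there exist a symmetric positive definite matrix $S_0 \in \mathbb{R}^{d\times d}$, a full-column-rank matrix $A_0 \in \mathbb{R}^{d\times m}$ (for some $k \le m \le d-1$), and a vector $b_0 \in \mathbb{R}^d$ such that the unique minimizer $x^\star$ of $\frac12 x^\top S_0 x - b_0^\top x$ subject to $A_0^\top x = 0$ satisfies $P_{A_0^\perp} S_0^i (S_0 x^\star - b_0) = 0$ for all $i = 0, 1, \ldots, k-1$, and $P_{A_0^\perp} S_0^k (S_0 x^\star - b_0) \ne 0$. -/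
open Matrix

/-- The null space of `Aᵀ`, as a subspace of `ℝ^d`. -/
noncomputable def nullSpaceT {d q : ℕ} (A : Matrix (Fin d) (Fin q) ℝ) :
    Submodule ℝ (EuclideanSpace ℝ (Fin d)) :=
  LinearMap.ker ((Matrix.mulVecLin A.transpose).comp
    ((EuclideanSpace.equiv (Fin d) ℝ).toLinearEquiv.toLinearMap))

/-- Multiplication of a square matrix with a Euclidean vector. -/
noncomputable def mulE {d : ℕ} (S : Matrix (Fin d) (Fin d) ℝ)
    (x : EuclideanSpace ℝ (Fin d)) : EuclideanSpace ℝ (Fin d) :=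
  (EuclideanSpace.equiv (Fin d) ℝ).symm (S.mulVec ((EuclideanSpace.equiv (Fin d) ℝ) x))

/-- The quadratic objective `½ xᵀ S x - bᵀ x`. -/
noncomputable def quadObj {d : ℕ} (S : Matrix (Fin d) (Fin d) ℝ)
    (b x : EuclideanSpace ℝ (Fin d)) : ℝ :=
  (1 / 2) * ∑ i, x i * (∑ j, S i j * x j) - ∑ i, b i * x i

/-!
Take `S₀ = B Bᵀ` with `B` the upper bidiagonal matrix of ones: `B` is unitriangular, so `S₀` is
positive definite, and `S₀` is tridiagonal with ones on the superdiagonal. Take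
`A₀ = [e₁ ⋯ e_{d-1}]`, so that the feasible set is `span e₀`, and `b₀ = e_k ⊥ e₀`. Then `x⋆ = 0`,
the residual is `-e_k`, and its projected Krylov vectors are `-(S₀ⁱ)₀ₖ e₀`. A power `S₀ⁱ` vanishes
above its `i`-th superdiagonal, which consists of ones, so `(S₀ⁱ)₀ₖ` is `0` for `i < k` and `1`
for `i = k`.
-/

namespace Matrix

variable {R : Type*} {d : ℕ}

def IsUpperBanded [Zero R] (p : ℕ) (M : Matrix (Fin d) (Fin d) R) : Prop :=
  ∀ i j : Fin d, (i : ℕ) + p < j → M i j = 0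

namespace IsUpperBanded

variable [Semiring R] {p q : ℕ} {M N : Matrix (Fin d) (Fin d) R}

theorem mul (hM : M.IsUpperBanded p) (hN : N.IsUpperBanded q) :
    (M * N).IsUpperBanded (p + q) := by
  intro i j hij
  rw [mul_apply]
  refine Finset.sum_eq_zero fun l _ => ?_
  rcases lt_or_ge ((i : ℕ) + p) l with hl | hl
  · rw [hM i l hl, zero_mul]
  · rw [hN l j (by omega), mul_zero]

theorem mul_apply_of_eq (hM : M.IsUpperBanded p) (hN : N.IsUpperBanded q) {i j : Fin d}
    (l : Fin d) (hl : (l : ℕ) = i + p) (hj : (j : ℕ) = l + q) :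
    (M * N) i j = M i l * N l j := by
  rw [mul_apply]
  refine Finset.sum_eq_single l (fun l' _ hl' => ?_) (by simp)
  rcases lt_or_gt_of_ne (Fin.val_ne_of_ne hl') with h | h
  · rw [hN l' j (by omega), mul_zero]
  · rw [hM i l' (by omega), zero_mul]

theorem pow (hM : M.IsUpperBanded 1) (n : ℕ) : (M ^ n).IsUpperBanded n := by
  induction n with
  | zero => exact fun i j hij => one_apply_ne (fun h => by subst h; omega)
  | succ n ih => rw [pow_succ]; exact ih.mul hM

theorem pow_apply_eq_one (hM : M.IsUpperBanded 1)
    (hM₁ : ∀ i j : Fin d, (i : ℕ) + 1 = j → M i j = 1)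
    (n : ℕ) {i j : Fin d} (hij : (i : ℕ) + n = j) : (M ^ n) i j = 1 := by
  induction n generalizing j with
  | zero =>
    obtain rfl : i = j := Fin.ext (by simpa using hij)
    exact one_apply_eq i
  | succ n ih =>
    have hl : (i : ℕ) + n < d := by omega
    rw [pow_succ, (pow hM n).mul_apply_of_eq hM ⟨_, hl⟩ rfl (by simp; omega),
      ih rfl, hM₁ _ _ (by simp; omega), one_mul]

end IsUpperBanded

theorem IsUpperTriangular.isUpperBanded_transpose [Zero R] {M : Matrix (Fin d) (Fin d) R}
    (hM : M.IsUpperTriangular) : Mᵀ.IsUpperBanded 0 :=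
  fun i j hij => hM (show i < j from Fin.lt_def.2 (by omega))

theorem rank_eq_card_width_of_mul_eq_one {m n : Type*} [Fintype m] [Fintype n] [DecidableEq n]
    [CommRing R] [StrongRankCondition R] {A : Matrix m n R} {B : Matrix n m R}
    (hBA : B * A = 1) : A.rank = Fintype.card n :=
  le_antisymm A.rank_le_card_width <| by simpa [hBA, rank_one] using rank_mul_le_right B A

end Matrix

def upperBidiagonal (d : ℕ) : Matrix (Fin d) (Fin d) ℝ :=
  of fun i j => if (j : ℕ) = i ∨ (j : ℕ) = i + 1 then 1 else 0

def tridiagonal (d : ℕ) : Matrix (Fin d) (Fin d) ℝ :=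
  upperBidiagonal d * (upperBidiagonal d)ᵀ

lemma upperBidiagonal_isUpperBanded (d : ℕ) : (upperBidiagonal d).IsUpperBanded 1 :=
  fun _ _ _ => if_neg (by omega)

lemma upperBidiagonal_isUpperTriangular (d : ℕ) : (upperBidiagonal d).IsUpperTriangular :=
  fun _ _ hij => if_neg (by simp only [id, Fin.lt_def] at hij; omega)

lemma det_upperBidiagonal (d : ℕ) : (upperBidiagonal d).det = 1 := by
  rw [det_of_isUpperTriangular (upperBidiagonal_isUpperTriangular d)]
  exact Finset.prod_eq_one fun _ _ => if_pos (Or.inl rfl)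

lemma tridiagonal_posDef (d : ℕ) : (tridiagonal d).PosDef := by
  have hB : IsUnit (upperBidiagonal d) := by
    rw [isUnit_iff_isUnit_det, det_upperBidiagonal]
    exact isUnit_one
  simpa [tridiagonal] using PosDef.mul_conjTranspose_self _ (vecMul_injective_iff_isUnit.2 hB)

lemma tridiagonal_isUpperBanded (d : ℕ) : (tridiagonal d).IsUpperBanded 1 :=
  (upperBidiagonal_isUpperBanded d).mul
    (upperBidiagonal_isUpperTriangular d).isUpperBanded_transpose

lemma tridiagonal_apply_of_eq_succ {d : ℕ} {i j : Fin d} (hij : (i : ℕ) + 1 = j) :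
    tridiagonal d i j = 1 := by
  rw [tridiagonal, (upperBidiagonal_isUpperBanded d).mul_apply_of_eq
    (upperBidiagonal_isUpperTriangular d).isUpperBanded_transpose j hij.symm rfl]
  simp [upperBidiagonal, hij]

def identityTailColumns (n : ℕ) : Matrix (Fin (n + 1)) (Fin n) ℝ :=
  (1 : Matrix (Fin (n + 1)) (Fin (n + 1)) ℝ).submatrix id Fin.succ

lemma mem_nullSpaceT_identityTailColumns {n : ℕ} {x : EuclideanSpace ℝ (Fin (n + 1))} :
    x ∈ nullSpaceT (identityTailColumns n) ↔ ∀ j : Fin n, x j.succ = 0 := by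
  simp [nullSpaceT, identityTailColumns, funext_iff, mulVec, dotProduct, one_apply]

lemma rank_identityTailColumns (n : ℕ) : (identityTailColumns n).rank = n := by
  rw [rank_eq_card_width_of_mul_eq_one (B := (identityTailColumns n)ᵀ), Fintype.card_fin]
  rw [identityTailColumns, transpose_submatrix, transpose_one,
    ← submatrix_mul _ _ _ _ _ Function.bijective_id, one_mul,
    submatrix_one _ (Fin.succ_injective _)]

lemma orthogonalProjectionOnto_nullSpaceT_identityTailColumns_eq_zero_iff {n : ℕ}
    (v : EuclideanSpace ℝ (Fin (n + 1))) :
    ((nullSpaceT (identityTailColumns n)).orthogonalProjectionOnto v :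
      EuclideanSpace ℝ (Fin (n + 1))) = 0 ↔ v 0 = 0 := by
  rw [ZeroMemClass.coe_eq_zero, Submodule.orthogonalProjectionOnto_eq_zero_iff,
    Submodule.mem_orthogonal]
  constructor
  · intro h
    have he₀ : EuclideanSpace.single 0 1 ∈ nullSpaceT (identityTailColumns n) :=
      mem_nullSpaceT_identityTailColumns.2 fun j => by simp [Fin.succ_ne_zero]
    simpa [EuclideanSpace.inner_single_left] using h _ he₀
  · intro h u hu
    rw [mem_nullSpaceT_identityTailColumns] at hu
    simp [PiLp.inner_apply, Fin.sum_univ_succ, hu, h]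

section QuadraticProgram

variable {d : ℕ} {S : Matrix (Fin d) (Fin d) ℝ} {b x : EuclideanSpace ℝ (Fin d)}

lemma quadObj_zero (S : Matrix (Fin d) (Fin d) ℝ) (b : EuclideanSpace ℝ (Fin d)) :
    quadObj S b 0 = 0 := by
  simp [quadObj]

lemma quadObj_pos (hS : S.PosDef) (hbx : inner ℝ b x = 0) (hx : x ≠ 0) :
    0 < quadObj S b x := by
  have hlin : ∑ i, b i * x i = 0 := by simpa [PiLp.inner_apply, mul_comm] using hbx
  have hquad := hS.dotProduct_mulVec_pos (x := x.ofLp) (by simpa using hx)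
  simp only [star_trivial, dotProduct, mulVec] at hquad
  rw [quadObj, hlin]
  linarith

lemma zero_isUniqueMin_quadObj {W : Submodule ℝ (EuclideanSpace ℝ (Fin d))} (hS : S.PosDef)
    (hb : b ∈ Wᗮ) :
    (0 ∈ W ∧ ∀ y ∈ W, quadObj S b 0 ≤ quadObj S b y) ∧
      ∀ x, (x ∈ W ∧ ∀ y ∈ W, quadObj S b x ≤ quadObj S b y) → x = 0 := by
  have hpos : ∀ y ∈ W, y ≠ 0 → 0 < quadObj S b y := fun y hy hy0 =>
    quadObj_pos hS (Submodule.inner_left_of_mem_orthogonal hy hb) hy0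
  refine ⟨⟨W.zero_mem, fun y hy => ?_⟩, fun x ⟨hx, hmin⟩ => ?_⟩
  · rw [quadObj_zero]
    rcases eq_or_ne y 0 with rfl | hy0
    · rw [quadObj_zero]
    · exact (hpos y hy hy0).le
  · by_contra hx0
    have h0 := hmin 0 W.zero_mem
    rw [quadObj_zero] at h0
    exact (hpos x hx hx0).not_ge h0

end QuadraticProgram

lemma mulE_zero_sub_single_apply {d : ℕ} (M S : Matrix (Fin d) (Fin d) ℝ) (i j : Fin d) :
    mulE M (mulE S 0 - EuclideanSpace.single j 1) i = -M i j := by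
  simp [mulE, mulVec_neg, EuclideanSpace.equiv, PiLp.coe_continuousLinearEquiv, PiLp.ofLp_single]

/-- For positive integers `k, d` with `k + 1 < d`, there exist a symmetric positive
definite `S₀ ∈ ℝ^{d×d}`, a full-column-rank `A₀ ∈ ℝ^{d×m}` with `k ≤ m ≤ d-1`, and
`b₀ ∈ ℝ^d` such that the unique minimizer `x⋆` of `½ xᵀ S₀ x - b₀ᵀ x` subject to
`A₀ᵀ x = 0` satisfies `P_{A₀⊥} S₀^i (S₀ x⋆ - b₀) = 0` for all `i < k` and
`P_{A₀⊥} S₀^k (S₀ x⋆ - b₀) ≠ 0`. -/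
theorem stmt9 (k d : ℕ) (hk : 1 ≤ k) (hkd : k + 1 < d) :
    ∃ (m : ℕ), k ≤ m ∧ m ≤ d - 1 ∧
    ∃ (S0 : Matrix (Fin d) (Fin d) ℝ) (A0 : Matrix (Fin d) (Fin m) ℝ)
      (b0 xs : EuclideanSpace ℝ (Fin d)),
      S0.PosDef ∧ A0.rank = m ∧
      (xs ∈ nullSpaceT A0 ∧ ∀ y ∈ nullSpaceT A0, quadObj S0 b0 xs ≤ quadObj S0 b0 y) ∧
      (∀ x', (x' ∈ nullSpaceT A0 ∧ ∀ y ∈ nullSpaceT A0, quadObj S0 b0 x' ≤ quadObj S0 b0 y) →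
        x' = xs) ∧
      (∀ i < k,
        (Submodule.orthogonalProjectionOnto (nullSpaceT A0) (mulE (S0 ^ i) (mulE S0 xs - b0)) :
          EuclideanSpace ℝ (Fin d)) = 0) ∧
      (Submodule.orthogonalProjectionOnto (nullSpaceT A0) (mulE (S0 ^ k) (mulE S0 xs - b0)) :
        EuclideanSpace ℝ (Fin d)) ≠ 0 := by
  obtain ⟨n, rfl⟩ : ∃ n, d = n + 1 := ⟨d - 1, by omega⟩
  set e : Fin (n + 1) := (⟨k - 1, by omega⟩ : Fin n).succ
  have he : (e : ℕ) = k := by simp [e]; omega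
  have hb : EuclideanSpace.single e 1 ∈ (nullSpaceT (identityTailColumns n))ᗮ := by
    refine (Submodule.mem_orthogonal' _ _).2 fun u hu => ?_
    simpa [EuclideanSpace.inner_single_left] using mem_nullSpaceT_identityTailColumns.1 hu _
  obtain ⟨hmin, huniq⟩ := zero_isUniqueMin_quadObj (tridiagonal_posDef _) hb
  refine ⟨n, by omega, by omega, tridiagonal (n + 1), identityTailColumns n,
    EuclideanSpace.single e 1, 0, tridiagonal_posDef _, rank_identityTailColumns n, hmin, huniq,
    fun i hi => ?_, ?_⟩
  · rw [orthogonalProjectionOnto_nullSpaceT_identityTailColumns_eq_zero_iff,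
      mulE_zero_sub_single_apply, (tridiagonal_isUpperBanded _).pow i 0 e (by simp; omega),
      neg_zero]
  · rw [Ne, orthogonalProjectionOnto_nullSpaceT_identityTailColumns_eq_zero_iff,
      mulE_zero_sub_single_apply, (tridiagonal_isUpperBanded _).pow_apply_eq_one
        (fun _ _ => tridiagonal_apply_of_eq_succ) k (by simp [he])]
    norm_num
end

section
/- Let $u_n, v_n \ge 0$ satisfy, for all $n$ beyond some index, $u_{n+1} \le (1 - \mu\eta_n) u_n + C_1 \eta_n v_n + C_2 \eta_n^2$ and $v_{n+1} \le (1 - \tfrac{p_n}{2}) v_n + C_3 \tfrac{\eta_n^2}{p_n} u_n + C_4 \tfrac{\eta_n^2}{p_n} + C_5 \eta_n^2$, where $\eta_n = \eta_0 n^{-\alpha}$, $p_n = \gamma \eta_n^\beta$, $0 < \alpha < 1$, $0 \le \beta < 1$, and $\mu, \gamma, C_i > 0$. Then there exist constants such that $u_n = O(n^{-\alpha\min\{1, 2-2\beta\}})$ and $v_n = O(n^{-2\alpha(1-\beta)})$. -/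
open Filter Asymptotics

/-!
The power laws `A n^{-a}`, `B n^{-b}` with `a = α min{1, 2 - 2β}` and `b = 2α(1 - β)` are a
supersolution of the coupled recursion from some index `N` on. Since
`(n+1)^{-c} ≥ n^{-c} - c n^{-c-1}`, one step of the induction only needs the contraction
`μ η_n · A n^{-a}` (resp. `(p_n / 2) · B n^{-b}`) to dominate the forcing terms plus the drift
`c n^{-c-1}`. With `η_n ≍ n^{-α}` and `η_n² / p_n ≍ n^{-(αβ + b)}`, the choice of `a, b` makes every
forcing term decay at least as fast as the contraction, while the drift and the coupling term
`(η_n² / p_n) u_n` are smaller by a vanishing factor (`n^{α-1}`, `n^{αβ-1}`, `n^{-a}`). Scaling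
`A, B` up to cover `u_N, v_N` closes the induction.
-/

theorem Real.one_sub_mul_sub_one_le_rpow_neg {y c : ℝ} (hy : 0 < y) (hc : 0 ≤ c) :
    1 - c * (y - 1) ≤ y ^ (-c) := by
  calc 1 - c * (y - 1) ≤ 1 - c * Real.log y := by
        gcongr; exact Real.log_le_sub_one_of_pos hy
    _ ≤ Real.exp (Real.log y * -c) := by linarith [Real.add_one_le_exp (Real.log y * -c)]
    _ = y ^ (-c) := (Real.rpow_def_of_pos hy _).symm

theorem Real.rpow_neg_sub_mul_rpow_neg_le_add_one_rpow_neg {x c : ℝ} (hx : 0 < x) (hc : 0 ≤ c) :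
    x ^ (-c) - c * x ^ (-(c + 1)) ≤ (x + 1) ^ (-c) := by
  have hy : 0 < (x + 1) / x := by positivity
  calc x ^ (-c) - c * x ^ (-(c + 1)) = x ^ (-c) * (1 - c * ((x + 1) / x - 1)) := by
        rw [neg_add, Real.rpow_add hx, Real.rpow_neg_one]; field_simp; ring
    _ ≤ x ^ (-c) * ((x + 1) / x) ^ (-c) := by
        gcongr; exact Real.one_sub_mul_sub_one_le_rpow_neg hy hc
    _ = (x + 1) ^ (-c) := by rw [← Real.mul_rpow hx.le hy.le, mul_div_cancel₀ _ hx.ne']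

theorem Real.rpow_neg_le_rpow_mul_rpow_neg {N x e e' : ℝ} (hN : 0 < N) (hNx : N ≤ x)
    (he : e ≤ e') : x ^ (-e') ≤ N ^ (e - e') * x ^ (-e) := by
  have hx : 0 < x := hN.trans_le hNx
  rw [show -e' = (e - e') + -e by ring, Real.rpow_add hx]
  exact mul_le_mul_of_nonneg_right (Real.rpow_le_rpow_of_nonpos hN hNx (by linarith))
    (Real.rpow_nonneg hx.le _)

theorem eventually_mul_natCast_rpow_le (c : ℝ) {d ε : ℝ} (hd : d < 0) (hε : 0 < ε) :
    ∀ᶠ n : ℕ in atTop, c * (n : ℝ) ^ d ≤ ε := by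
  have h : Tendsto (fun n : ℕ => c * (n : ℝ) ^ d) atTop (nhds (c * 0)) :=
    ((tendsto_rpow_neg_atTop (neg_pos.2 hd)).comp tendsto_natCast_atTop_atTop
      |>.congr fun n => by simp).const_mul c
  exact (mul_zero c ▸ h).eventually_le_const hε

theorem le_mul_add_one_rpow_neg_of_le_one_sub_mul {x c e k W w w' r : ℝ} (hx : 0 < x)
    (hc : 0 ≤ c) (hW : 0 ≤ W) (hk : k * x ^ (-e) ≤ 1) (hw : w ≤ W * x ^ (-c))
    (hw' : w' ≤ (1 - k * x ^ (-e)) * w + r)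
    (hr : r + c * W * x ^ (-(c + 1)) ≤ k * W * x ^ (-(e + c))) :
    w' ≤ W * (x + 1) ^ (-c) := by
  have hstep : (1 - k * x ^ (-e)) * w ≤ (1 - k * x ^ (-e)) * (W * x ^ (-c)) :=
    mul_le_mul_of_nonneg_left hw (sub_nonneg.2 hk)
  have hsplit : (1 - k * x ^ (-e)) * (W * x ^ (-c)) = W * x ^ (-c) - k * W * x ^ (-(e + c)) := by
    rw [neg_add, Real.rpow_add hx]; ring
  have hbern :=
    mul_le_mul_of_nonneg_left (Real.rpow_neg_sub_mul_rpow_neg_le_add_one_rpow_neg hx hc) hW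
  linarith

theorem coupled_recursion_u_step {N x α a b m c₁ c₂ A B u v u' : ℝ} (hN : 1 ≤ N) (hNx : N ≤ x)
    (hα : α ≤ 1) (ha : 0 ≤ a) (haα : a ≤ α) (hab : a ≤ b) (hc₁ : 0 ≤ c₁) (hc₂ : 0 ≤ c₂) (hA : 0 ≤ A)
    (hB : 0 ≤ B) (hmx : m * x ^ (-α) ≤ 1) (hU : c₁ * B + c₂ + a * A * N ^ (α - 1) ≤ m * A)
    (hu : u ≤ A * x ^ (-a)) (hv : v ≤ B * x ^ (-b))
    (hu' : u' ≤ (1 - m * x ^ (-α)) * u + c₁ * x ^ (-α) * v + c₂ * x ^ (-(2 * α))) :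
    u' ≤ A * (x + 1) ^ (-a) := by
  have hx1 : 1 ≤ x := hN.trans hNx
  have hx : 0 < x := one_pos.trans_le hx1
  refine le_mul_add_one_rpow_neg_of_le_one_sub_mul hx ha hA hmx hu
    (r := c₁ * x ^ (-α) * v + c₂ * x ^ (-(2 * α))) (by linarith) ?_
  have hcoupling : c₁ * x ^ (-α) * v ≤ c₁ * B * x ^ (-(α + a)) :=
    calc c₁ * x ^ (-α) * v ≤ c₁ * x ^ (-α) * (B * x ^ (-b)) := by gcongr
      _ = c₁ * B * x ^ (-(α + b)) := by rw [neg_add, Real.rpow_add hx]; ring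
      _ ≤ c₁ * B * x ^ (-(α + a)) := by gcongr
  have hforce : x ^ (-(2 * α)) ≤ x ^ (-(α + a)) :=
    Real.rpow_le_rpow_of_exponent_le hx1 (by linarith)
  have hdrift : x ^ (-(a + 1)) ≤ N ^ (α - 1) * x ^ (-(α + a)) := by
    have h := Real.rpow_neg_le_rpow_mul_rpow_neg (one_pos.trans_le hN) hNx
      (show α + a ≤ a + 1 by linarith)
    rwa [show α + a - (a + 1) = α - 1 by ring] at h
  have := mul_le_mul_of_nonneg_right hU (Real.rpow_nonneg hx.le (-(α + a)))
  linarith [mul_le_mul_of_nonneg_left hforce hc₂,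
    mul_le_mul_of_nonneg_left hdrift (mul_nonneg ha hA)]

theorem coupled_recursion_v_step {N x a b e g d₃ d₄ A B u v v' : ℝ} (hN : 0 < N) (hNx : N ≤ x)
    (he : e ≤ 1) (ha : 0 ≤ a) (hb : 0 ≤ b) (hd₃ : 0 ≤ d₃) (hA : 0 ≤ A) (hB : 0 ≤ B)
    (hgx : g * x ^ (-e) ≤ 1) (hV : d₃ * A * N ^ (-a) + d₄ + b * B * N ^ (e - 1) ≤ g * B)
    (hu : u ≤ A * x ^ (-a)) (hv : v ≤ B * x ^ (-b))
    (hv' : v' ≤ (1 - g * x ^ (-e)) * v + d₃ * x ^ (-(e + b)) * u + d₄ * x ^ (-(e + b))) :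
    v' ≤ B * (x + 1) ^ (-b) := by
  have hx : 0 < x := hN.trans_le hNx
  refine le_mul_add_one_rpow_neg_of_le_one_sub_mul hx hb hB hgx hv
    (r := d₃ * x ^ (-(e + b)) * u + d₄ * x ^ (-(e + b))) (by linarith) ?_
  have hcoupling : d₃ * x ^ (-(e + b)) * u ≤ d₃ * A * N ^ (-a) * x ^ (-(e + b)) :=
    calc d₃ * x ^ (-(e + b)) * u ≤ d₃ * x ^ (-(e + b)) * (A * x ^ (-a)) := by gcongr
      _ = d₃ * A * x ^ (-a) * x ^ (-(e + b)) := by ring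
      _ ≤ d₃ * A * N ^ (-a) * x ^ (-(e + b)) := by
        have := Real.rpow_le_rpow_of_nonpos hN hNx (neg_nonpos.2 ha)
        have := Real.rpow_nonneg hx.le (-(e + b))
        gcongr
  have hdrift : x ^ (-(b + 1)) ≤ N ^ (e - 1) * x ^ (-(e + b)) := by
    have h := Real.rpow_neg_le_rpow_mul_rpow_neg hN hNx (show e + b ≤ b + 1 by linarith)
    rwa [show e + b - (b + 1) = e - 1 by ring] at h
  have := mul_le_mul_of_nonneg_right hV (Real.rpow_nonneg hx.le (-(e + b)))
  linarith [mul_le_mul_of_nonneg_left hdrift (mul_nonneg hb hB)]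

section CoupledRecursion

variable {u v : ℕ → ℝ} {α e a b m c₁ c₂ g d₃ d₄ : ℝ}

theorem le_rpow_neg_of_coupled_recursion {A B : ℝ} {N : ℕ} (hN : 1 ≤ N) (hα : α ≤ 1)
    (he₀ : 0 ≤ e) (he₁ : e ≤ 1) (ha : 0 ≤ a) (haα : a ≤ α) (hab : a ≤ b) (hm : 0 ≤ m)
    (hc₁ : 0 ≤ c₁) (hc₂ : 0 ≤ c₂) (hg₁ : g ≤ 1) (hd₃ : 0 ≤ d₃) (hA : 0 ≤ A)
    (hB : 0 ≤ B) (hmN : m * (N : ℝ) ^ (-α) ≤ 1)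
    (hU : c₁ * B + c₂ + a * A * (N : ℝ) ^ (α - 1) ≤ m * A)
    (hV : d₃ * A * (N : ℝ) ^ (-a) + d₄ + b * B * (N : ℝ) ^ (e - 1) ≤ g * B)
    (huN : u N ≤ A * (N : ℝ) ^ (-a)) (hvN : v N ≤ B * (N : ℝ) ^ (-b))
    (hrecu : ∀ n ≥ N, u (n + 1) ≤ (1 - m * (n : ℝ) ^ (-α)) * u n
      + c₁ * (n : ℝ) ^ (-α) * v n + c₂ * (n : ℝ) ^ (-(2 * α)))
    (hrecv : ∀ n ≥ N, v (n + 1) ≤ (1 - g * (n : ℝ) ^ (-e)) * v n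
      + d₃ * (n : ℝ) ^ (-(e + b)) * u n + d₄ * (n : ℝ) ^ (-(e + b))) :
    ∀ n ≥ N, u n ≤ A * (n : ℝ) ^ (-a) ∧ v n ≤ B * (n : ℝ) ^ (-b) := by
  have hN₁ : (1 : ℝ) ≤ N := by exact_mod_cast hN
  intro n hn
  induction n, hn using Nat.le_induction with
  | base => exact ⟨huN, hvN⟩
  | succ n hn ih =>
    have hNn : (N : ℝ) ≤ n := by exact_mod_cast hn
    have hmx : m * (n : ℝ) ^ (-α) ≤ 1 :=
      le_trans (mul_le_mul_of_nonneg_left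
        (Real.rpow_le_rpow_of_nonpos (by linarith) hNn (by linarith)) hm) hmN
    have hgx : g * (n : ℝ) ^ (-e) ≤ 1 :=
      mul_le_one₀ hg₁ (by positivity)
        (Real.rpow_le_one_of_one_le_of_nonpos (hN₁.trans hNn) (by linarith))
    push_cast
    exact ⟨coupled_recursion_u_step hN₁ hNn hα ha haα hab hc₁ hc₂ hA hB hmx hU ih.1 ih.2
        (hrecu n hn),
      coupled_recursion_v_step (by positivity) hNn he₁ ha (by linarith) hd₃ hA hB hgx hV ih.1 ih.2
        (hrecv n hn)⟩

/-- Scaling `A₀, B₀` by `s ≥ 1` scales every term except the constants `c₂, d₄ ≥ 0`, so the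
conditions persist; `s` is fixed afterwards by the values `u N`, `v N`. -/
theorem exists_scalable_constants (hα : α < 1) (he : e < 1) (ha : 0 < a) (hm : 0 < m)
    (hc₁ : 0 ≤ c₁) (hc₂ : 0 ≤ c₂) (hg : 0 < g) (hd₄ : 0 ≤ d₄) :
    ∃ A₀ B₀ : ℝ, 0 < A₀ ∧ 0 < B₀ ∧ ∀ᶠ N : ℕ in atTop, ∀ s : ℝ, 1 ≤ s →
      c₁ * (s * B₀) + c₂ + a * (s * A₀) * (N : ℝ) ^ (α - 1) ≤ m * (s * A₀) ∧
      d₃ * (s * A₀) * (N : ℝ) ^ (-a) + d₄ + b * (s * B₀) * (N : ℝ) ^ (e - 1) ≤ g * (s * B₀) := by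
  set B₀ := 2 * (d₄ + 1) / g with hB₀
  set A₀ := 2 * (c₁ * B₀ + c₂ + 1) / m with hA₀
  have hB₀pos : 0 < B₀ := by rw [hB₀]; positivity
  have hA₀pos : 0 < A₀ := by rw [hA₀]; positivity
  have hmA₀ : m * A₀ = 2 * (c₁ * B₀ + c₂ + 1) := by rw [hA₀]; field_simp
  have hgB₀ : g * B₀ = 2 * (d₄ + 1) := by rw [hB₀]; field_simp
  refine ⟨A₀, B₀, hA₀pos, hB₀pos, ?_⟩
  filter_upwards [eventually_mul_natCast_rpow_le a (by linarith : α - 1 < 0) (half_pos hm),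
    eventually_mul_natCast_rpow_le b (by linarith : e - 1 < 0) (by positivity : 0 < g / 4),
    eventually_mul_natCast_rpow_le (d₃ * A₀) (neg_lt_zero.2 ha) (by positivity : 0 < g * B₀ / 4)]
    with N hdriftu hdriftv hcoupling s hs
  constructor
  · nlinarith [mul_le_mul_of_nonneg_left hdriftu (by positivity : 0 ≤ s * A₀)]
  · nlinarith [mul_le_mul_of_nonneg_left hdriftv (by positivity : 0 ≤ s * B₀),
      mul_le_mul_of_nonneg_left hcoupling (by positivity : 0 ≤ s)]

theorem exists_eventually_le_rpow_of_coupled_recursion (hα : α < 1) (he₀ : 0 ≤ e)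
    (he₁ : e < 1) (ha : 0 < a) (haα : a ≤ α) (hab : a ≤ b) (hm : 0 < m) (hc₁ : 0 ≤ c₁)
    (hc₂ : 0 ≤ c₂) (hg₀ : 0 < g) (hg₁ : g ≤ 1) (hd₃ : 0 ≤ d₃) (hd₄ : 0 ≤ d₄) (N₀ : ℕ)
    (hrecu : ∀ n ≥ N₀, u (n + 1) ≤ (1 - m * (n : ℝ) ^ (-α)) * u n
      + c₁ * (n : ℝ) ^ (-α) * v n + c₂ * (n : ℝ) ^ (-(2 * α)))
    (hrecv : ∀ n ≥ N₀, v (n + 1) ≤ (1 - g * (n : ℝ) ^ (-e)) * v n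
      + d₃ * (n : ℝ) ^ (-(e + b)) * u n + d₄ * (n : ℝ) ^ (-(e + b))) :
    ∃ A B : ℝ, ∀ᶠ n : ℕ in atTop, u n ≤ A * (n : ℝ) ^ (-a) ∧ v n ≤ B * (n : ℝ) ^ (-b) := by
  obtain ⟨A₀, B₀, hA₀, hB₀, hconst⟩ :=
    exists_scalable_constants (b := b) (d₃ := d₃) hα he₁ ha hm hc₁ hc₂ hg₀ hd₄
  obtain ⟨N, hconstN, hN₀, hN₁, hmN⟩ := (hconst.and <| (eventually_ge_atTop N₀).and <|
    (eventually_ge_atTop 1).and <|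
      eventually_mul_natCast_rpow_le m (neg_lt_zero.2 (ha.trans_le haα)) one_pos).exists
  have hN : (0 : ℝ) < N := by exact_mod_cast hN₁
  have hscale : ∀ {y c : ℝ}, 0 < c → ∀ᶠ s : ℝ in atTop, y ≤ s * c := fun hc =>
    (tendsto_id.atTop_mul_const hc).eventually_ge_atTop _
  obtain ⟨s, hs₁, huN, hvN⟩ := ((eventually_ge_atTop 1).and <|
    (hscale (y := u N) (by positivity : 0 < A₀ * (N : ℝ) ^ (-a))).and <|
      hscale (y := v N) (by positivity : 0 < B₀ * (N : ℝ) ^ (-b))).exists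
  obtain ⟨hU, hV⟩ := hconstN s hs₁
  refine ⟨s * A₀, s * B₀, eventually_atTop.2 ⟨N, le_rpow_neg_of_coupled_recursion hN₁ hα.le
    he₀ he₁.le ha.le haα hab hm.le hc₁ hc₂ hg₁ hd₃ (by positivity) (by positivity) hmN hU hV
    (by linarith) (by linarith) (fun n hn => hrecu n (hN₀.trans hn))
    (fun n hn => hrecv n (hN₀.trans hn))⟩⟩

end CoupledRecursion

theorem isBigO_of_nonneg_of_eventually_le {ι : Type*} {l : Filter ι} {f g : ι → ℝ} {A : ℝ}
    (hf : ∀ i, 0 ≤ f i) (hg : ∀ i, 0 ≤ g i) (h : ∀ᶠ i in l, f i ≤ A * g i) : f =O[l] g :=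
  IsBigO.of_bound A <| h.mono fun i hi => by
    rwa [Real.norm_of_nonneg (hf i), Real.norm_of_nonneg (hg i)]

theorem mul_rpow_neg_sq {η₀ x α : ℝ} (hx : 0 ≤ x) :
    (η₀ * x ^ (-α)) ^ 2 = η₀ ^ 2 * x ^ (-(2 * α)) := by
  rw [mul_pow, ← Real.rpow_natCast (x ^ (-α)), ← Real.rpow_mul hx]
  congr 2; push_cast; ring

theorem mul_rpow_neg_rpow {η₀ x α β : ℝ} (hη₀ : 0 ≤ η₀) (hx : 0 ≤ x) :
    (η₀ * x ^ (-α)) ^ β = η₀ ^ β * x ^ (-(α * β)) := by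
  rw [Real.mul_rpow hη₀ (Real.rpow_nonneg hx _), ← Real.rpow_mul hx, neg_mul]

/-- The contraction rate `min P 2 / 2 · x^{-αβ}` (with `P = γ η₀^β`) rather than `p / 2` keeps the
factor `1 - ·` nonnegative also when `β = 0`. -/
theorem le_rpow_form_of_v_recursion {x η₀ γ α β C₃ C₄ C₅ η p u v v' : ℝ} (hx : 1 ≤ x)
    (hη₀ : 0 < η₀) (hγ : 0 < γ) (hαβ : 0 ≤ α * β) (hC₅ : 0 ≤ C₅) (hv : 0 ≤ v)
    (hη : η = η₀ * x ^ (-α)) (hp : p = γ * η ^ β)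
    (h : v' ≤ (1 - p / 2) * v + C₃ * η ^ 2 / p * u + C₄ * η ^ 2 / p + C₅ * η ^ 2) :
    v' ≤ (1 - min (γ * η₀ ^ β) 2 / 2 * x ^ (-(α * β))) * v
      + C₃ * η₀ ^ 2 / (γ * η₀ ^ β) * x ^ (-(α * β + 2 * α * (1 - β))) * u
      + (C₄ * η₀ ^ 2 / (γ * η₀ ^ β) + C₅ * η₀ ^ 2) * x ^ (-(α * β + 2 * α * (1 - β))) := by
  have hx₀ : 0 < x := one_pos.trans_le hx
  have hP : 0 < γ * η₀ ^ β := by positivity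
  have hp' : p = γ * η₀ ^ β * x ^ (-(α * β)) := by
    rw [hp, hη, mul_rpow_neg_rpow hη₀.le hx₀.le, mul_assoc]
  have hη2 : η ^ 2 = η₀ ^ 2 * x ^ (-(2 * α)) := by rw [hη, mul_rpow_neg_sq hx₀.le]
  have hratio : η ^ 2 / p = η₀ ^ 2 / (γ * η₀ ^ β) * x ^ (-(α * β + 2 * α * (1 - β))) := by
    rw [hη2, hp', show -(α * β + 2 * α * (1 - β)) = -(2 * α) - -(α * β) by ring,
      Real.rpow_sub hx₀]
    field_simp
  have hdecay : (1 - p / 2) * v ≤ (1 - min (γ * η₀ ^ β) 2 / 2 * x ^ (-(α * β))) * v := by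
    have hX := Real.rpow_nonneg hx₀.le (-(α * β))
    have hmin : min (γ * η₀ ^ β) 2 / 2 * x ^ (-(α * β)) ≤ p / 2 := by
      rw [hp']; nlinarith [min_le_left (γ * η₀ ^ β) 2]
    exact mul_le_mul_of_nonneg_right (by linarith) hv
  have hforce : C₅ * η ^ 2 ≤ C₅ * η₀ ^ 2 * x ^ (-(α * β + 2 * α * (1 - β))) := by
    rw [hη2, ← mul_assoc]
    exact mul_le_mul_of_nonneg_left (Real.rpow_le_rpow_of_exponent_le hx (by linarith))
      (by positivity)
  calc v' ≤ (1 - p / 2) * v + C₃ * (η ^ 2 / p) * u + C₄ * (η ^ 2 / p) + C₅ * η ^ 2 := by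
        simpa only [mul_div_assoc] using h
    _ ≤ (1 - min (γ * η₀ ^ β) 2 / 2 * x ^ (-(α * β))) * v + C₃ * (η ^ 2 / p) * u
        + C₄ * (η ^ 2 / p) + C₅ * η₀ ^ 2 * x ^ (-(α * β + 2 * α * (1 - β))) := by
        linarith
    _ = _ := by rw [hratio]; ring

/-- Deterministic recursion behind Theorem 1 of the paper: if nonnegative `u, v`
eventually satisfy
`u (n+1) ≤ (1 - μ η n) u n + C₁ η n v n + C₂ η n²` and
`v (n+1) ≤ (1 - p n / 2) v n + C₃ (η n)²/p n · u n + C₄ (η n)²/p n + C₅ (η n)²`,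
with `η n = η₀ n^{-α}`, `p n = γ (η n)^β`, `0 < α < 1`, `0 ≤ β < 1`, then
`u n = O(n^{-α min{1, 2-2β}})` and `v n = O(n^{-2α(1-β)})`. -/
theorem stmt16 (u v : ℕ → ℝ) (hu : ∀ n, 0 ≤ u n) (hv : ∀ n, 0 ≤ v n)
    (η0 γ α β μ C1 C2 C3 C4 C5 : ℝ)
    (hη0 : 0 < η0) (hγ : 0 < γ) (hα0 : 0 < α) (hα1 : α < 1)
    (hβ0 : 0 ≤ β) (hβ1 : β < 1) (hμ : 0 < μ)
    (hC1 : 0 < C1) (hC2 : 0 < C2) (hC3 : 0 < C3) (hC4 : 0 < C4) (hC5 : 0 < C5)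
    (η pr : ℕ → ℝ)
    (hη : ∀ n, η n = η0 * (n : ℝ) ^ (-α))
    (hpr : ∀ n, pr n = γ * (η n) ^ β)
    (N0 : ℕ)
    (hrecu : ∀ n ≥ N0,
      u (n + 1) ≤ (1 - μ * η n) * u n + C1 * η n * v n + C2 * (η n) ^ 2)
    (hrecv : ∀ n ≥ N0,
      v (n + 1) ≤ (1 - pr n / 2) * v n + C3 * (η n) ^ 2 / pr n * u n
        + C4 * (η n) ^ 2 / pr n + C5 * (η n) ^ 2) :
    (u =O[atTop] fun n : ℕ => (n : ℝ) ^ (-(α * min 1 (2 - 2 * β)))) ∧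
    (v =O[atTop] fun n : ℕ => (n : ℝ) ^ (-(2 * α * (1 - β)))) := by
  have hmin : 0 < min 1 (2 - 2 * β) := lt_min one_pos (by linarith)
  have haα : α * min 1 (2 - 2 * β) ≤ α := mul_le_of_le_one_right hα0.le (min_le_left _ _)
  have hab : α * min 1 (2 - 2 * β) ≤ 2 * α * (1 - β) := by
    linarith [mul_le_mul_of_nonneg_left (min_le_right 1 (2 - 2 * β)) hα0.le]
  have hrecu' : ∀ n ≥ N0, u (n + 1) ≤ (1 - μ * η0 * (n : ℝ) ^ (-α)) * u n
      + C1 * η0 * (n : ℝ) ^ (-α) * v n + C2 * η0 ^ 2 * (n : ℝ) ^ (-(2 * α)) := fun n hn =>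
    calc u (n + 1) ≤ _ := hrecu n hn
      _ = _ := by rw [hη, mul_rpow_neg_sq n.cast_nonneg]; ring
  have hrecv' := fun n (hn : n ≥ max N0 1) => le_rpow_form_of_v_recursion (u := u n)
    (by exact_mod_cast le_of_max_le_right hn) hη0 hγ (by positivity) hC5.le (hv n) (hη n)
    (hpr n) (hrecv n (le_of_max_le_left hn))
  obtain ⟨A, B, hAB⟩ := exists_eventually_le_rpow_of_coupled_recursion (m := μ * η0)
    (c₁ := C1 * η0) (c₂ := C2 * η0 ^ 2) hα1 (by positivity)
    (by nlinarith) (mul_pos hα0 hmin) haα hab (by positivity) (by positivity) (by positivity)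
    (by positivity) (by linarith [min_le_right (γ * η0 ^ β) 2]) (by positivity) (by positivity)
    _ (fun n hn => hrecu' n (le_of_max_le_left hn)) hrecv'
  have hpow : ∀ (c : ℝ) (n : ℕ), 0 ≤ (n : ℝ) ^ c := fun c n => by positivity
  exact ⟨isBigO_of_nonneg_of_eventually_le hu (hpow _) (hAB.mono fun _ h => h.1),
    isBigO_of_nonneg_of_eventually_le hv (hpow _) (hAB.mono fun _ h => h.2)⟩
end
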